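/- Assume m = 0 and suppose that every equilibrium point of the system (S) in the open quadrant is hyperbolic. Then the number n of such equilibrium points is 0, 1 or 2; if n = 2 then exactly one of the two equilibria satisfies det J(x*, y*) < 0 (a saddle) and the other satisfies det J(x*, y*) > 0 (a node or focus); if n = 1 then the unique equilibrium satisfies det J(x*, y*) > 0 (it is a node or a focus). -/

import Mathlib

open Filter Topology

/-- First right-hand side of the prey–predator system (S):
`x' = x(1−x) − a·y·(x−m)₊/(k₁+(x−m)₊)`. -/
noncomputable def preyRHS (a k1 m x y : ℝ) : ℝ :=
  x * (1 - x) - a * y * max 0 (x - m) / (k1 + max 0 (x - m))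

/-- Second right-hand side of the prey–predator system (S):
`y' = b·y·(1 − y/(k₂+(x−m)₊))`. -/
noncomputable def predRHS (b k2 m x y : ℝ) : ℝ :=
  b * y * (1 - y / (k2 + max 0 (x - m)))

/-- Determinant of the Jacobian matrix
`J(x*, y*) = [[1 − 2x* − a·y*·k₁/(k₁ + x* − m)², −a·(x* − m)/(k₁ + x* − m)], [b, −b]]`
of the right-hand side of (S) at an equilibrium point. -/
noncomputable def detJ (a b k1 m xs ys : ℝ) : ℝ :=
  (1 - 2 * xs - a * ys * k1 / (k1 + xs - m) ^ 2) * (-b) -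
    (-(a * (xs - m) / (k1 + xs - m))) * b

/-- Trace of the Jacobian matrix of the right-hand side of (S) at an equilibrium point. -/
noncomputable def traceJ (a b k1 m xs ys : ℝ) : ℝ :=
  (1 - 2 * xs - a * ys * k1 / (k1 + xs - m) ^ 2) + (-b)

lemma equilib_iff (a b k1 k2 : ℝ) (ha : 0 < a) (hb : 0 < b) (hk1 : 0 < k1) (hk2 : 0 < k2)
    {x y : ℝ} (hx : 0 < x) (hy : 0 < y) :
    (preyRHS a k1 0 x y = 0 ∧ predRHS b k2 0 x y = 0) ↔
      (y = k2 + x ∧ x^2 + (k1-1+a)*x + (a*k2-k1) = 0) := by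
  have hmax : max 0 (x - 0) = x := by simp [hx.le]
  have h1 : (0:ℝ) < k1 + x := by linarith
  have h2 : (0:ℝ) < k2 + x := by linarith
  unfold preyRHS predRHS
  rw [hmax]
  constructor
  · rintro ⟨hp, hq⟩
    have hyeq : y = k2 + x := by
      field_simp at hq
      nlinarith [hq, mul_pos hb hy]
    subst hyeq
    refine ⟨rfl, ?_⟩
    field_simp at hp
    nlinarith [hp]
  · rintro ⟨hyeq, hroot⟩
    subst hyeq
    constructor
    · field_simp
      ring_nf
      nlinarith [hroot]
    · field_simp
      ring

lemma detJ_eq (a b k1 k2 : ℝ) (hk1 : 0 < k1) {x : ℝ} (hx : 0 < x)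
    (hroot : x^2 + (k1-1+a)*x + (a*k2-k1) = 0) :
    detJ a b k1 0 x (k2 + x) = b * x / (k1 + x) * (2*x + (k1-1+a)) := by
  have h1 : (0:ℝ) < k1 + x := by linarith
  have ha : a * (k2 + x) = (1 - x) * (k1 + x) := by nlinarith [hroot]
  unfold detJ
  have h1ne : k1 + x ≠ 0 := h1.ne'
  simp only [sub_zero]
  field_simp
  linear_combination (b * k1) * ha

/-- Poincaré-index consequences when `m = 0`: if all equilibria in the open quadrant are
hyperbolic, their number is 0, 1 or 2; if 2, exactly one is a saddle (`det J < 0`) and the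
other is a node or focus (`det J > 0`); if 1, it is a node or focus. -/
theorem poincare_index_m_zero (a b k1 k2 m : ℝ)
    (ha : 0 < a) (hb : 0 < b) (hk1 : 0 < k1) (hk2 : 0 < k2)
    (hm : m = 0)
    (S : Set (ℝ × ℝ))
    (hS : S = {p : ℝ × ℝ | 0 < p.1 ∧ 0 < p.2 ∧
      preyRHS a k1 m p.1 p.2 = 0 ∧ predRHS b k2 m p.1 p.2 = 0})
    (hhyp : ∀ p ∈ S, detJ a b k1 m p.1 p.2 ≠ 0 ∧
      (0 < detJ a b k1 m p.1 p.2 → traceJ a b k1 m p.1 p.2 ≠ 0)) :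
    (S.ncard = 0 ∨ S.ncard = 1 ∨ S.ncard = 2) ∧
    (S.ncard = 2 → ∃ p ∈ S, detJ a b k1 m p.1 p.2 < 0 ∧
      ∀ q ∈ S, q ≠ p → 0 < detJ a b k1 m q.1 q.2) ∧
    (S.ncard = 1 → ∀ p ∈ S, 0 < detJ a b k1 m p.1 p.2) := by
  subst hm
  set B := k1 - 1 + a with hB
  set C := a * k2 - k1 with hC
  set R : Set ℝ := {x : ℝ | 0 < x ∧ x^2 + B*x + C = 0} with hR
  -- S is the image of R under x ↦ (x, k2+x)
  have hSim : S = (fun x => (x, k2 + x)) '' R := by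
    rw [hS]
    ext ⟨x, y⟩
    simp only [Set.mem_setOf_eq, Set.mem_image, hR]
    constructor
    · rintro ⟨hx, hy, hp, hq⟩
      obtain ⟨hyeq, hroot⟩ := (equilib_iff a b k1 k2 ha hb hk1 hk2 hx hy).mp ⟨hp, hq⟩
      exact ⟨x, ⟨hx, hroot⟩, by simp [hyeq]⟩
    · rintro ⟨x', ⟨hx', hroot⟩, heq⟩
      obtain ⟨rfl, rfl⟩ := Prod.mk.injEq .. ▸ heq
      have hy : 0 < k2 + x' := by linarith
      obtain ⟨hp, hq⟩ := (equilib_iff a b k1 k2 ha hb hk1 hk2 hx' hy).mpr ⟨rfl, hroot⟩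
      exact ⟨hx', hy, hp, hq⟩
  have hinj : Function.Injective (fun x : ℝ => (x, k2 + x)) := by
    intro u v huv
    simpa using congrArg Prod.fst huv
  have hcard : S.ncard = R.ncard := by
    rw [hSim, Set.ncard_image_of_injective _ hinj]
  -- sign of detJ at a root
  have hdet : ∀ x ∈ R, detJ a b k1 0 x (k2 + x) = b * x / (k1 + x) * (2*x + B) := by
    rintro x ⟨hx, hroot⟩
    exact detJ_eq a b k1 k2 hk1 hx hroot
  have hfac : ∀ x ∈ R, 0 < b * x / (k1 + x) := by
    rintro x ⟨hx, -⟩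
    have : (0:ℝ) < k1 + x := by linarith
    positivity
  -- the reflected root
  have hrefl : ∀ x ∈ R, 2*x + B < 0 → (-B - x) ∈ R ∧ -B - x ≠ x := by
    rintro x ⟨hx, hroot⟩ hneg
    have h1 : 0 < -B - x := by linarith
    refine ⟨⟨h1, by linear_combination hroot⟩, by intro h; nlinarith⟩
  -- R is finite: contained in a two-element set
  have hsub : R ⊆ {(-B - Real.sqrt (B^2 - 4*C))/2, (-B + Real.sqrt (B^2 - 4*C))/2} := by
    rintro x ⟨hx, hroot⟩
    have hsq : (2*x + B)^2 = B^2 - 4*C := by linear_combination 4 * hroot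
    have hs : Real.sqrt (B^2 - 4*C) = |2*x + B| := by
      rw [← hsq, Real.sqrt_sq_eq_abs]
    rcases abs_cases (2*x + B) with ⟨he, -⟩ | ⟨he, -⟩
    · refine Set.mem_insert_iff.mpr (Or.inr ?_)
      simp only [Set.mem_singleton_iff]
      rw [hs, he]; ring
    · refine Set.mem_insert_iff.mpr (Or.inl ?_)
      rw [hs, he]; ring
  have hfinR : R.Finite := Set.Finite.subset ((Set.finite_singleton _).insert _) hsub
  have hle2 : R.ncard ≤ 2 := by
    calc R.ncard ≤ ({(-B - Real.sqrt (B^2 - 4*C))/2, (-B + Real.sqrt (B^2 - 4*C))/2} : Set ℝ).ncard :=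
          Set.ncard_le_ncard hsub ((Set.finite_singleton _).insert _)
      _ ≤ 2 := by
          apply le_trans (Set.ncard_insert_le _ _)
          simp
  refine ⟨by omega, ?_, ?_⟩
  · -- two equilibria
    intro h2
    rw [hcard] at h2
    obtain ⟨x1, x2, hne, hR2⟩ := Set.ncard_eq_two.mp h2
    have hx1R : x1 ∈ R := by rw [hR2]; left; rfl
    have hx2R : x2 ∈ R := by rw [hR2]; right; rfl
    have hsum : x1 + x2 = -B := by
      obtain ⟨-, h1⟩ := hx1R
      obtain ⟨-, h2'⟩ := hx2R
      have : (x1 - x2) * (x1 + x2 + B) = 0 := by linear_combination h1 - h2'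
      rcases mul_eq_zero.mp this with h | h
      · exact absurd (by linarith) hne
      · linarith
    have key : ∀ u v : ℝ, u ∈ R → v ∈ R → u < v → u + v = -B → R = {u, v} →
        ∃ p ∈ S, detJ a b k1 0 p.1 p.2 < 0 ∧
          ∀ q ∈ S, q ≠ p → 0 < detJ a b k1 0 q.1 q.2 := by
      intro u v huR hvR huv hsum' hRuv
      refine ⟨(u, k2 + u), by rw [hSim]; exact ⟨u, huR, rfl⟩, ?_, ?_⟩
      · rw [hdet u huR]
        exact mul_neg_of_pos_of_neg (hfac u huR) (by linarith)
      · rintro q hq hqne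
        rw [hSim] at hq
        obtain ⟨x', hx'R, rfl⟩ := hq
        have hx'ne : x' ≠ u := fun h => hqne (by rw [h])
        have hx'eq : x' = v := by
          have := hRuv ▸ hx'R
          rcases this with h | h
          · exact absurd h hx'ne
          · exact h
        have : 0 < detJ a b k1 0 x' (k2 + x') := by
          rw [hx'eq, hdet v hvR]
          exact mul_pos (hfac v hvR) (by linarith)
        exact this
    rcases lt_or_gt_of_ne hne with hlt | hlt
    · exact key x1 x2 hx1R hx2R hlt hsum hR2
    · exact key x2 x1 hx2R hx1R hlt (by linarith) (by rw [hR2, Set.pair_comm])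
  · -- one equilibrium
    intro h1
    rw [hcard] at h1
    obtain ⟨x0, hR1⟩ := Set.ncard_eq_one.mp h1
    intro p hpS
    have hx0R : x0 ∈ R := by rw [hR1]; rfl
    have hpeq : p = (x0, k2 + x0) := by
      rw [hSim] at hpS
      obtain ⟨x', hx'R, rfl⟩ := hpS
      have : x' = x0 := by rw [hR1] at hx'R; exact hx'R
      rw [this]
    have hdne := (hhyp p hpS).1
    rw [hpeq] at hdne ⊢
    rw [hdet x0 hx0R] at hdne ⊢
    have hf := hfac x0 hx0R
    rcases lt_trichotomy (2*x0 + B) 0 with hlt | heq | hgt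
    · exfalso
      obtain ⟨hmem, hne⟩ := hrefl x0 hx0R hlt
      rw [hR1] at hmem hx0R
      exact hne (hmem.trans hx0R.symm)
    · exact absurd (by rw [heq]; ring) hdne
    · exact mul_pos hf hgt
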